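/- Let C and D be groupoids each having a finite set of objects. Then the canonical map from the profinite completion of C × D to the product of the profinite completions, ∧(C × D) → Ĉ × D̂, induced by the two projections, is an isomorphism of profinite groupoids. -/

import Mathlib

open CategoryTheory

/-- A factorization of a functor `F : C × D ⥤ E` (with `E` a finite groupoid) through a
product `A × B` of finite quotients of `C` and `D`: finite groupoids `A`, `B`, functors
`p : C ⥤ A` and `q : D ⥤ B` surjective on objects and on morphisms, and a (unique)
functor `G : A × B ⥤ E` with `(p × q) ⋙ G = F`. The existence of such factorizations,
for all finite `E`, says exactly that the canonical map of profinite groupoids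
`∧(C × D) → Ĉ × D̂` induced by the two projections is an isomorphism. -/
structure ProdQuotFactorization
    (C D E : Type) [Groupoid C] [Groupoid D] [Groupoid E] (F : C × D ⥤ E) where
  A : Type
  B : Type
  [gA : Groupoid.{u_3} A]
  [gB : Groupoid B]
  finA : Finite (Σ a a' : A, a ⟶ a')
  finB : Finite (Σ b b' : B, b ⟶ b')
  p : C ⥤ A
  q : D ⥤ B
  G : A × B ⥤ E
  p_surj_obj : Function.Surjective p.obj
  p_surj_map : Function.Surjective
    (fun z : Σ x y : C, x ⟶ y => (⟨p.obj z.1, p.obj z.2.1, p.map z.2.2⟩ : Σ a a' : A, a ⟶ a'))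
  q_surj_obj : Function.Surjective q.obj
  q_surj_map : Function.Surjective
    (fun z : Σ x y : D, x ⟶ y => (⟨q.obj z.1, q.obj z.2.1, q.map z.2.2⟩ : Σ b b' : B, b ⟶ b'))
  fact : p.prod q ⋙ G = F
  uniq : ∀ G' : A × B ⥤ E, p.prod q ⋙ G' = F → G' = G

/-! `F` factors through the quotients of `C` and `D` by the kernels of its two curried functors
`C ⥤ (D ⥤ E)` and `D ⥤ (C ⥤ E)`, i.e. `f ~ f'` iff `F(f, 𝟙 d) = F(f', 𝟙 d)` for every `d`, and
dually. It descends to the product of these quotients because `F(f, g) = F(f, 𝟙) ≫ F(𝟙, g)`.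
They are finite groupoids: their objects are those of `C` and `D`, and a hom-set of the first
embeds into the natural transformations between two functors `D ⥤ E`, of which there are finitely
many since `D` has finitely many objects and `E` finitely many morphisms. -/

universe v u w

namespace CategoryTheory

noncomputable instance ShrinkHoms.groupoid (C : Type*) [Groupoid C] [LocallySmall.{w} C] :
    Groupoid.{w} (ShrinkHoms C) :=
  Groupoid.ofIsIso fun f => isIso_of_reflects_iso f (ShrinkHoms.inverse C)

namespace ShrinkHoms

variable (C : Type*) [Category C] [LocallySmall.{w} C]

lemma functor_comp_inverse : functor.{w} C ⋙ inverse C = 𝟭 C :=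
  Functor.ext_of_iso (equivalence C).unitIso.symm fun _ => rfl

lemma inverse_comp_functor : inverse.{w} C ⋙ functor C = 𝟭 _ :=
  Functor.ext_of_iso (equivalence C).counitIso fun _ => rfl

instance [Finite C] : Finite (ShrinkHoms C) := ‹Finite C›

instance [∀ X Y : C, Finite (X ⟶ Y)] (X Y : ShrinkHoms C) : Finite (X ⟶ Y) :=
  Shrink.instFinite

end ShrinkHoms

lemma Functor.surjective_sigma_map_of_full {A B : Type*} [Category A] [Category B] (P : A ⥤ B)
    [P.Full] (hP : Function.Surjective P.obj) :
    Function.Surjective (fun z : Σ x y : A, x ⟶ y =>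
      (⟨P.obj z.1, P.obj z.2.1, P.map z.2.2⟩ : Σ b b' : B, b ⟶ b')) := by
  rintro ⟨b, b', g⟩
  obtain ⟨a, rfl⟩ := hP b
  obtain ⟨a', rfl⟩ := hP b'
  exact ⟨⟨a, a', P.preimage g⟩, by simp⟩

lemma finite_hom_of_finite_sigma {E : Type*} [Quiver E] (hE : Finite (Σ x y : E, x ⟶ y))
    (x y : E) : Finite (x ⟶ y) :=
  .of_injective (fun f => (⟨x, y, f⟩ : Σ x y : E, x ⟶ y)) fun f g h => by simpa using h

instance NatTrans.finite {C D : Type*} [Category C] [Category D] [Finite C]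
    [∀ x y : D, Finite (x ⟶ y)] (G H : C ⥤ D) : Finite (G ⟶ H) :=
  .of_injective NatTrans.app fun _ _ => NatTrans.ext

namespace Quotient

variable {C D E : Type*} [Category C] [Category D] [Category E]

lemma functor_obj_surjective (r : HomRel C) : Function.Surjective (functor r).obj :=
  fun ⟨x⟩ => ⟨x, rfl⟩

instance [Finite C] (r : HomRel C) : Finite (Quotient r) :=
  .of_surjective _ (functor_obj_surjective r)

instance finite_hom_homRel (L : C ⥤ D) [∀ x y : D, Finite (x ⟶ y)] (a b : Quotient L.homRel) :
    Finite (a ⟶ b) :=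
  .of_injective _ (lift L.homRel L fun _ _ _ _ h => h).map_injective

lemma prod_functor_comp_injective (r : HomRel C) (s : HomRel D)
    {G₁ G₂ : Quotient r × Quotient s ⥤ E}
    (h : (functor r).prod (functor s) ⋙ G₁ = (functor r).prod (functor s) ⋙ G₂) :
    G₁ = G₂ := by
  rw [← Functor.uncurry_obj_curry_obj_flip_flip', ← Functor.uncurry_obj_curry_obj_flip_flip']
    at h
  exact Functor.curry_obj_injective <| Functor.flip_injective <| lift_unique' _ _ _ <|
    Functor.flip_injective <| lift_unique' _ _ _ <| Functor.uncurry_obj_injective h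

end Quotient

namespace Functor

variable {C D E : Type*} [Category C] [Category D] [Category E] (F : C × D ⥤ E)

abbrev QuotFst := CategoryTheory.Quotient (curry.obj F).homRel

abbrev QuotSnd := CategoryTheory.Quotient (curry.obj F).flip.homRel

def liftQuotProd : F.QuotFst × F.QuotSnd ⥤ E :=
  uncurry.obj (Quotient.lift (curry.obj F).flip.homRel
    (Quotient.lift (curry.obj F).homRel (curry.obj F) fun _ _ _ _ h => h).flip
    fun _ _ _ _ h => by ext ⟨c⟩; exact NatTrans.congr_app h c).flip

lemma prod_comp_liftQuotProd :
    (Quotient.functor (curry.obj F).homRel).prod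
      (Quotient.functor (curry.obj F).flip.homRel) ⋙ F.liftQuotProd = F := by
  rw [← uncurry_obj_curry_obj_flip_flip', liftQuotProd, curry_obj_uncurry_obj, flip_flip,
    Quotient.lift_spec, flip_flip]
  exact (congrArg uncurry.obj (Quotient.lift_spec _ _ _)).trans (uncurry_obj_curry_obj F)

end Functor

end CategoryTheory

/-- `ShrinkHoms` moves the finite hom-sets of `A` and `B` into the universe demanded by
`ProdQuotFactorization`. -/
lemma ProdQuotFactorization.nonempty_of_full {C D E : Type} [Groupoid.{v} C] [Groupoid.{v} D]
    [Groupoid.{u} E] {F : C × D ⥤ E} {A B : Type} [Groupoid A] [Groupoid B] [Finite A]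
    [Finite B] [∀ a a' : A, Finite (a ⟶ a')] [∀ b b' : B, Finite (b ⟶ b')]
    (p : C ⥤ A) (q : D ⥤ B) [p.Full] [q.Full]
    (hp : Function.Surjective p.obj) (hq : Function.Surjective q.obj)
    (G : A × B ⥤ E) (fact : p.prod q ⋙ G = F)
    (uniq : ∀ G' : A × B ⥤ E, p.prod q ⋙ G' = F → G' = G) :
    Nonempty (ProdQuotFactorization.{v, u, w} C D E F) := by
  have : LocallySmall.{w} A := ⟨fun _ _ => inferInstance⟩
  have : LocallySmall.{w} B := ⟨fun _ _ => inferInstance⟩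
  open ShrinkHoms in
  exact ⟨{
    A := ShrinkHoms A
    B := ShrinkHoms B
    finA := inferInstance
    finB := inferInstance
    p := p ⋙ functor A
    q := q ⋙ functor B
    G := (inverse A).prod (inverse B) ⋙ G
    p_surj_obj := hp
    p_surj_map := Functor.surjective_sigma_map_of_full _ hp
    q_surj_obj := hq
    q_surj_map := Functor.surjective_sigma_map_of_full _ hq
    fact := by
      change p.prod q ⋙ (functor A ⋙ inverse A).prod (functor B ⋙ inverse B) ⋙ G = F
      rw [functor_comp_inverse, functor_comp_inverse]
      exact fact
    uniq := fun G' hG' =>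
      calc G' = (inverse A ⋙ functor A).prod (inverse B ⋙ functor B) ⋙ G' := by
            rw [inverse_comp_functor, inverse_comp_functor]; rfl
        _ = (inverse A).prod (inverse B) ⋙ G := by
          rw [← uniq ((functor A).prod (functor B) ⋙ G') hG']; rfl }⟩

/-- for groupoids `C` and `D` with finitely many objects, the canonical map
`∧(C × D) → Ĉ × D̂` of profinite groupoids is an isomorphism; concretely, every functor
from `C × D` to a finite groupoid `E` factors uniquely through the product of suitable
finite quotients of `C` and `D`. -/
theorem profinite_completion_preserves_product_of_groupoids
    (C D : Type) [Groupoid C] [Groupoid D] [Finite C] [Finite D]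
    (E : Type) [Groupoid E] (hE : Finite (Σ x y : E, x ⟶ y))
    (F : C × D ⥤ E) :
    Nonempty (ProdQuotFactorization C D E F) := by
  have := finite_hom_of_finite_sigma hE
  refine ProdQuotFactorization.nonempty_of_full (Quotient.functor _) (Quotient.functor _)
    (Quotient.functor_obj_surjective _) (Quotient.functor_obj_surjective _) F.liftQuotProd
    F.prod_comp_liftQuotProd fun G' hG' => ?_
  exact Quotient.prod_functor_comp_injective _ _ (hG'.trans F.prod_comp_liftQuotProd.symm)
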